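/- The number of non-trivial compositions of order k of differential operations from the set {dir_e, grad, curl, div} in R^3 equals F_{k+3} + 1, where F_k denotes the k-th Fibonacci number (F_1 = F_2 = 1). -/

import Mathlib

/-!
Count the σ-chains by their first letter: if `c n a` is the number of chains `a, b₁, …, bₙ`,
then `c 0 a = 1` and `c (n + 1) a = ∑_{σ(a,b)} c n b`. Since `2` is followed only by `2`,
`1` only by `3`, and both `0` and `3` by `0` or `1`, the Fibonacci recursion gives
`c n 0 = c n 3 = F (n + 2)`, `c n 1 = F (n + 1)` and `c n 2 = 1`. Summing over the first letter,
the number of chains of length `n + 1` is `2 F (n + 2) + F (n + 1) + 1 = F (n + 4) + 1`.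
-/

/-- The relation σ on indices of the operations ∇₀ = dir_e, ∇₁ = grad, ∇₂ = curl,
∇₃ = div in ℝ³: `sigma3 i j` holds iff the composition ∇ⱼ ∘ ∇ᵢ is non-trivial. -/
def sigma3 (i j : Fin 4) : Prop :=
  (i, j) ∈ [((0 : Fin 4), (0 : Fin 4)), (0, 1), (1, 3), (2, 2), (3, 0), (3, 1)]

instance : DecidableRel sigma3 := fun _ _ => inferInstanceAs (Decidable (_ ∈ _))

namespace List

variable {α : Type*} (R : α → α → Prop)

abbrev Chains (n : ℕ) : Type _ := {l : List α // l.length = n ∧ l.IsChain R}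

abbrev ChainsFrom (n : ℕ) (a : α) : Type _ := {l : List α // l.length = n ∧ (a :: l).IsChain R}

def ofFnChainEquiv (k : ℕ) :
    {w : Fin k → α // ∀ i : Fin k, ∀ h : (i : ℕ) + 1 < k, R (w i) (w ⟨(i : ℕ) + 1, h⟩)} ≃
      Chains R k where
  toFun w := ⟨ofFn w.1, length_ofFn, isChain_ofFn.mpr fun i hi => w.2 ⟨i, by omega⟩ hi⟩
  invFun l := ⟨fun i => l.1[i.1]'(i.2.trans_eq l.2.1.symm),
    fun i _ => isChain_iff_getElem.mp l.2.2 i (by omega)⟩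
  left_inv w := by ext; simp
  right_inv l := Subtype.ext <| ext_getElem (by simp [l.2.1]) fun _ _ _ => by simp

def chainsSuccEquiv (n : ℕ) : Chains R (n + 1) ≃ Σ a, ChainsFrom R n a where
  toFun
    | ⟨a :: l, hlen, hchain⟩ => ⟨a, l, by simpa using hlen, hchain⟩
  invFun := fun ⟨a, l, hlen, hchain⟩ => ⟨a :: l, by simp [hlen], hchain⟩
  left_inv := by
    rintro ⟨_ | ⟨a, l⟩, hlen, hchain⟩
    · simp at hlen
    · rfl
  right_inv := fun ⟨_, _, _, _⟩ => rfl

def chainsFromSuccEquiv (n : ℕ) (a : α) :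
    ChainsFrom R (n + 1) a ≃ Σ b : {b // R a b}, ChainsFrom R n b where
  toFun
    | ⟨b :: l, hlen, hchain⟩ =>
      ⟨⟨b, (isChain_cons_cons.mp hchain).1⟩, l, by simpa using hlen,
        (isChain_cons_cons.mp hchain).2⟩
  invFun := fun ⟨⟨b, hab⟩, l, hlen, hchain⟩ =>
    ⟨b :: l, by simp [hlen], isChain_cons_cons.mpr ⟨hab, hchain⟩⟩
  left_inv := by
    rintro ⟨_ | ⟨b, l⟩, hlen, hchain⟩
    · simp at hlen
    · rfl
  right_inv := fun ⟨⟨_, _⟩, _, _, _⟩ => rfl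

lemma card_chainsFrom_zero (a : α) : Nat.card (ChainsFrom R 0 a) = 1 := by
  rw [Nat.card_eq_one_iff_unique]
  refine ⟨⟨fun l m => Subtype.ext ?_⟩, ⟨⟨[], rfl, isChain_singleton a⟩⟩⟩
  rw [length_eq_zero_iff.mp l.2.1, length_eq_zero_iff.mp m.2.1]

variable [Fintype α]

instance (n : ℕ) (a : α) : Finite (ChainsFrom R n a) :=
  Finite.of_injective (β := List.Vector α n) (fun l => ⟨l.1, l.2.1⟩)
    fun _ _ h => Subtype.ext (congrArg List.Vector.toList h)

lemma card_chains_succ (n : ℕ) :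
    Nat.card (Chains R (n + 1)) = ∑ a, Nat.card (ChainsFrom R n a) := by
  rw [Nat.card_congr (chainsSuccEquiv R n), Nat.card_sigma]

lemma card_chainsFrom_succ [DecidableRel R] (n : ℕ) (a : α) :
    Nat.card (ChainsFrom R (n + 1) a) = ∑ b with R a b, Nat.card (ChainsFrom R n b) := by
  rw [Nat.card_congr (chainsFromSuccEquiv R n a), Nat.card_sigma]
  exact (Finset.sum_subtype _ (fun _ => Finset.mem_filter_univ _)
    fun b => Nat.card (ChainsFrom R n b)).symm

end List

open List

lemma card_chainsFrom_sigma3 (n : ℕ) (a : Fin 4) :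
    Nat.card (ChainsFrom sigma3 n a) =
      ![Nat.fib (n + 2), Nat.fib (n + 1), 1, Nat.fib (n + 2)] a := by
  induction n generalizing a with
  | zero => fin_cases a <;> simp [card_chainsFrom_zero]
  | succ n ih =>
    rw [card_chainsFrom_succ]
    fin_cases a <;> simp [Finset.sum_filter, Fin.sum_univ_four, sigma3, ih, Nat.fib_add_two]
      <;> omega

/-- The number of non-trivial compositions of order `k` of differential operations
from {dir_e, grad, curl, div} in ℝ³ (modeled as words `i₁ … i_k` over `Fin 4`
with `sigma3 (i_j) (i_{j+1})` for all consecutive pairs) equals `F_{k+3} + 1`. -/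
theorem stmt0 (k : ℕ) (hk : 1 ≤ k) :
    Nat.card {w : Fin k → Fin 4 //
      ∀ i : Fin k, ∀ h : (i : ℕ) + 1 < k, sigma3 (w i) (w ⟨(i : ℕ) + 1, h⟩)} =
    Nat.fib (k + 3) + 1 := by
  obtain ⟨n, rfl⟩ := Nat.exists_eq_add_of_le' hk
  rw [Nat.card_congr (ofFnChainEquiv sigma3 (n + 1)), card_chains_succ, Fin.sum_univ_four]
  simp [card_chainsFrom_sigma3, Nat.fib_add_two]
  omega
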